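/- Let (M,g) be a complete m-dimensional Riemannian manifold with a pole, whose radial curvature K_r satisfies −α² ≤ K_r ≤ −β² with α, β > 0 and (m−1)β − pα > 0. Then the eigenvalues of Hess(r²) satisfy Σᵢλᵢ − p·λ_m ≥ 2(m − pα/β). -/

import Mathlib

/-!
With `cᵢ = ⟪bᵢ, ∂r⟫` one has `Σ cᵢ² = 1` and `λᵢ = ⟪Hess(r²) bᵢ, bᵢ⟫ = 2cᵢ² + 2r ⟪A bᵢ, bᵢ⟫`, so the
comparison bounds give `2cᵢ² + 2rB(1 - cᵢ²) ≤ λᵢ ≤ 2cᵢ² + 2rC(1 - cᵢ²)` with `B = β coth βr` and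
`C = α coth αr`. As `x coth x ≥ 1`, this yields `Σ λᵢ ≥ 2 + 2mrB` and `λₘ ≤ 2rC`. The two bounds are
compatible only if `B ≤ C`, which forces `β ≤ α` because `x coth x` is increasing; as `coth` is
decreasing, `βC ≤ αB`, hence `Σ λᵢ - p λₘ ≥ 2 + 2rB(m - pα/β) ≥ 2(m + 1 - pα/β)`.
-/

open RealInnerProductSpace

namespace Real

lemma sinh_le_mul_cosh {x : ℝ} (hx : 0 ≤ x) : sinh x ≤ x * cosh x := by
  have hmono : Monotone fun x : ℝ => x * cosh x - sinh x :=
    monotone_of_hasDerivAt_nonneg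
      (fun x => ((hasDerivAt_id x).mul (hasDerivAt_cosh x)).sub (hasDerivAt_sinh x))
      fun x => by
        have : 0 ≤ x * sinh x := by
          rcases le_total 0 x with h | h
          · exact mul_nonneg h (sinh_nonneg_iff.2 h)
          · exact mul_nonneg_of_nonpos_of_nonpos h (sinh_nonpos_iff.2 h)
        simpa using this
  simpa using hmono hx

lemma strictMonoOn_mul_cosh_div_sinh :
    StrictMonoOn (fun x : ℝ => x * cosh x / sinh x) (Set.Ioi 0) := by
  have hderiv : ∀ x ∈ Set.Ioi (0 : ℝ), HasDerivAt (fun x => x * cosh x / sinh x)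
      (((1 * cosh x + x * sinh x) * sinh x - x * cosh x * cosh x) / sinh x ^ 2) x :=
    fun x hx => ((hasDerivAt_id x).mul (hasDerivAt_cosh x)).div (hasDerivAt_sinh x)
      (sinh_pos_iff.2 hx).ne'
  refine strictMonoOn_of_hasDerivWithinAt_pos (convex_Ioi 0)
    (fun x hx => (hderiv x hx).continuousAt.continuousWithinAt)
    (fun x hx => (hderiv x (interior_subset hx)).hasDerivWithinAt) fun x hx => ?_
  rw [interior_Ioi, Set.mem_Ioi] at hx
  -- the numerator is `sinh (2 x) / 2 - x`
  have h2x : 2 * x < 2 * sinh x * cosh x := sinh_two_mul x ▸ self_lt_sinh_iff.2 (by linarith)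
  have := cosh_sq x
  exact div_pos (by nlinarith) (pow_pos (sinh_pos_iff.2 hx) 2)

lemma cosh_mul_sinh_le_cosh_mul_sinh {a b : ℝ} (hba : b ≤ a) :
    cosh a * sinh b ≤ cosh b * sinh a := by
  have := sinh_nonneg_iff.2 (sub_nonneg.2 hba)
  rw [sinh_sub] at this
  linarith

lemma one_le_mul_mul_cosh_div_sinh {k r : ℝ} (hk : 0 < k) (hr : 0 < r) :
    1 ≤ r * (k * (cosh (k * r) / sinh (k * r))) := by
  rw [show r * (k * (cosh (k * r) / sinh (k * r))) = k * r * cosh (k * r) / sinh (k * r) by ring,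
    one_le_div (sinh_pos_iff.2 (by positivity))]
  exact sinh_le_mul_cosh (by positivity)

lemma le_of_mul_cosh_div_sinh_le {α β r : ℝ} (hα : 0 < α) (hβ : 0 < β) (hr : 0 < r)
    (h : β * (cosh (β * r) / sinh (β * r)) ≤ α * (cosh (α * r) / sinh (α * r))) : β ≤ α := by
  have key : β * r * cosh (β * r) / sinh (β * r) ≤ α * r * cosh (α * r) / sinh (α * r) :=
    calc β * r * cosh (β * r) / sinh (β * r) = r * (β * (cosh (β * r) / sinh (β * r))) := by ring
      _ ≤ r * (α * (cosh (α * r) / sinh (α * r))) := by gcongr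
      _ = α * r * cosh (α * r) / sinh (α * r) := by ring
  rw [strictMonoOn_mul_cosh_div_sinh.le_iff_le (Set.mem_Ioi.2 (by positivity))
    (Set.mem_Ioi.2 (by positivity))] at key
  exact le_of_mul_le_mul_right key hr

lemma mul_mul_cosh_div_sinh_le {α β r : ℝ} (hβ : 0 < β) (hr : 0 < r) (hβα : β ≤ α) :
    β * (α * (cosh (α * r) / sinh (α * r))) ≤ α * (β * (cosh (β * r) / sinh (β * r))) := by
  have hα : 0 < α := hβ.trans_le hβα
  rw [mul_left_comm]
  refine mul_le_mul_of_nonneg_left (mul_le_mul_of_nonneg_left ?_ hβ.le) hα.le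
  rw [div_le_div_iff₀ (sinh_pos_iff.2 (by positivity)) (sinh_pos_iff.2 (by positivity))]
  exact cosh_mul_sinh_le_cosh_mul_sinh (by gcongr)

end Real

section

variable {E : Type*} [NormedAddCommGroup E] [InnerProductSpace ℝ E]

lemma inner_sub_inner_smul_self_eq_zero {ρ : E} (hρ : ‖ρ‖ = 1) (u : E) :
    ⟪u - ⟪u, ρ⟫ • ρ, ρ⟫ = 0 := by
  rw [inner_sub_left, real_inner_smul_left, real_inner_self_eq_norm_sq, hρ]
  ring

lemma norm_sub_inner_smul_sq {ρ : E} (hρ : ‖ρ‖ = 1) (u : E) :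
    ‖u - ⟪u, ρ⟫ • ρ‖ ^ 2 = ‖u‖ ^ 2 - ⟪u, ρ⟫ ^ 2 := by
  rw [norm_sub_sq_real, real_inner_smul_right, norm_smul, hρ, Real.norm_eq_abs, mul_one, sq_abs]
  ring

/-- `Hess (r²) = 2 dr ⊗ dr + 2 r Hess r`, where `ρ` is the radial unit vector and `A` represents
`Hess r`. -/
def hessSq (ρ : E) (A : E →ₗ[ℝ] E) (r : ℝ) (u : E) : E :=
  (2 * ⟪u, ρ⟫) • ρ + (2 * r) • A u

lemma inner_hessSq_self (ρ : E) (A : E →ₗ[ℝ] E) (r : ℝ) (u : E) :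
    ⟪hessSq ρ A r u, u⟫ = 2 * ⟪u, ρ⟫ ^ 2 + 2 * r * ⟪A u, u⟫ := by
  rw [hessSq, inner_add_left, real_inner_smul_left, real_inner_smul_left, real_inner_comm ρ u]
  ring

variable {A : E →ₗ[ℝ] E} (hA : ∀ v w, ⟪A v, w⟫ = ⟪v, A w⟫) {ρ : E} (hAρ : A ρ = 0)
include hA hAρ

lemma inner_map_sub_smul_self (u : E) (c : ℝ) :
    ⟪A (u - c • ρ), u - c • ρ⟫ = ⟪A u, u⟫ := by
  rw [map_sub, map_smul, hAρ, smul_zero, sub_zero, inner_sub_right, real_inner_smul_right,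
    hA u ρ, hAρ, inner_zero_right, mul_zero, sub_zero]

variable (hρ : ‖ρ‖ = 1)
include hρ

lemma mul_sub_inner_sq_le_inner_map_self {k : ℝ}
    (hk : ∀ v, ⟪v, ρ⟫ = 0 → k * ‖v‖ ^ 2 ≤ ⟪A v, v⟫) (u : E) :
    k * (‖u‖ ^ 2 - ⟪u, ρ⟫ ^ 2) ≤ ⟪A u, u⟫ := by
  simpa only [norm_sub_inner_smul_sq hρ, inner_map_sub_smul_self hA hAρ] using
    hk _ (inner_sub_inner_smul_self_eq_zero hρ u)

lemma inner_map_self_le_mul_sub_inner_sq {k : ℝ}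
    (hk : ∀ v, ⟪v, ρ⟫ = 0 → ⟪A v, v⟫ ≤ k * ‖v‖ ^ 2) (u : E) :
    ⟪A u, u⟫ ≤ k * (‖u‖ ^ 2 - ⟪u, ρ⟫ ^ 2) := by
  simpa only [norm_sub_inner_smul_sq hρ, inner_map_sub_smul_self hA hAρ] using
    hk _ (inner_sub_inner_smul_self_eq_zero hρ u)

variable {r : ℝ} (hr : 0 ≤ r)
include hr

lemma le_inner_hessSq_self {k : ℝ} (hk : ∀ v, ⟪v, ρ⟫ = 0 → k * ‖v‖ ^ 2 ≤ ⟪A v, v⟫) (u : E) :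
    2 * ⟪u, ρ⟫ ^ 2 + 2 * r * k * (‖u‖ ^ 2 - ⟪u, ρ⟫ ^ 2) ≤ ⟪hessSq ρ A r u, u⟫ := by
  rw [inner_hessSq_self, mul_assoc (2 * r)]
  gcongr
  exact mul_sub_inner_sq_le_inner_map_self hA hAρ hρ hk u

lemma inner_hessSq_self_le {k : ℝ} (hk : ∀ v, ⟪v, ρ⟫ = 0 → ⟪A v, v⟫ ≤ k * ‖v‖ ^ 2) (u : E) :
    ⟪hessSq ρ A r u, u⟫ ≤ 2 * ⟪u, ρ⟫ ^ 2 + 2 * r * k * (‖u‖ ^ 2 - ⟪u, ρ⟫ ^ 2) := by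
  rw [inner_hessSq_self, mul_assoc (2 * r)]
  gcongr
  exact inner_map_self_le_mul_sub_inner_sq hA hAρ hρ hk u

end

section

variable {ι : Type*} [Fintype ι] {c : ι → ℝ}

lemma two_add_mul_card_sub_one_le_sum (hc : ∑ i, c i ^ 2 = 1) {a : ℝ} {x : ι → ℝ}
    (hx : ∀ i, 2 * c i ^ 2 + a * (1 - c i ^ 2) ≤ x i) :
    2 + a * (Fintype.card ι - 1) ≤ ∑ i, x i := by
  have hsum : ∑ i, (2 * c i ^ 2 + a * (1 - c i ^ 2)) = 2 + a * (Fintype.card ι - 1) := by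
    simp only [mul_sub, mul_one, Finset.sum_add_distrib, Finset.sum_sub_distrib, ← Finset.mul_sum,
      hc, Finset.sum_const, Finset.card_univ, nsmul_eq_mul]
    ring
  exact hsum ▸ Finset.sum_le_sum fun i _ => hx i

lemma exists_sq_lt_one_of_sum_sq_eq_one (hι : 1 < Fintype.card ι) (hc : ∑ i, c i ^ 2 = 1) :
    ∃ i, c i ^ 2 < 1 := by
  by_contra! h
  have hcard : (Fintype.card ι : ℝ) ≤ ∑ i, c i ^ 2 := by
    simpa using Finset.sum_le_sum fun i (_ : i ∈ Finset.univ) => h i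
  have : (1 : ℝ) < Fintype.card ι := by exact_mod_cast hι
  linarith

end

theorem hessian_eigenvalue_estimate_negative_curvature_general {E : Type*} [NormedAddCommGroup E]
    [InnerProductSpace ℝ E] {m : ℕ}
    (p r α β : ℝ) (hp : 1 ≤ p) (hr : 0 < r)
    (hα : 0 < α) (hβ : 0 < β) (hdim : 0 < (m : ℝ) * β - p * α)
    (ρv : E) (hρv : ‖ρv‖ = 1)
    (A : E →ₗ[ℝ] E) (hAsym : ∀ v w, ⟪A v, w⟫ = ⟪v, A w⟫) (hAρ : A ρv = 0)
    (hA_lb : ∀ v, ⟪v, ρv⟫ = 0 →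
      β * (Real.cosh (β * r) / Real.sinh (β * r)) * ‖v‖ ^ 2 ≤ ⟪A v, v⟫)
    (hA_ub : ∀ v, ⟪v, ρv⟫ = 0 →
      ⟪A v, v⟫ ≤ α * (Real.cosh (α * r) / Real.sinh (α * r)) * ‖v‖ ^ 2)
    (lam : Fin (m + 1) → ℝ)
    (b : OrthonormalBasis (Fin (m + 1)) ℝ E)
    (hb : ∀ i, (2 * ⟪b i, ρv⟫) • ρv + (2 * r) • A (b i) = lam i • b i) :
    2 * (((m : ℝ) + 1) - p * α / β) ≤ (∑ i, lam i) - p * lam (Fin.last m) := by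
  set B := β * (Real.cosh (β * r) / Real.sinh (β * r))
  set C := α * (Real.cosh (α * r) / Real.sinh (α * r))
  set c : Fin (m + 1) → ℝ := fun i => ⟪b i, ρv⟫
  have hlam i : lam i = ⟪hessSq ρv A r (b i), b i⟫ := by
    rw [hessSq, hb i, real_inner_smul_left, real_inner_self_eq_norm_sq, b.orthonormal.1 i]
    ring
  have hlow i : 2 * c i ^ 2 + 2 * r * B * (1 - c i ^ 2) ≤ lam i := by
    simpa [hlam i, b.orthonormal.1 i] using le_inner_hessSq_self hAsym hAρ hρv hr.le hA_lb (b i)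
  have hup i : lam i ≤ 2 * c i ^ 2 + 2 * r * C * (1 - c i ^ 2) := by
    simpa [hlam i, b.orthonormal.1 i] using inner_hessSq_self_le hAsym hAρ hρv hr.le hA_ub (b i)
  have hc : ∑ i, c i ^ 2 = 1 := by simp only [c, b.sum_sq_inner_right, hρv, one_pow]
  have hm : 0 < m := by exact_mod_cast (show (0 : ℝ) < m by nlinarith)
  obtain ⟨i, hi⟩ := exists_sq_lt_one_of_sum_sq_eq_one (by rw [Fintype.card_fin]; omega) hc
  have hBC : B ≤ C := by
    have hpos : 0 < 2 * r * (1 - c i ^ 2) := by have := sub_pos.2 hi; positivity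
    exact le_of_mul_le_mul_right (by linarith [(hlow i).trans (hup i)]) hpos
  have hβα : β ≤ α := Real.le_of_mul_cosh_div_sinh_le hα hβ hr hBC
  have hCB : C ≤ α / β * B := by
    rw [div_mul_eq_mul_div, le_div_iff₀ hβ, mul_comm]
    exact Real.mul_mul_cosh_div_sinh_le hβ hr hβα
  have hrB : 1 ≤ r * B := Real.one_le_mul_mul_cosh_div_sinh hβ hr
  have hrC : 1 ≤ r * C := Real.one_le_mul_mul_cosh_div_sinh hα hr
  have hsum := two_add_mul_card_sub_one_le_sum hc hlow
  rw [Fintype.card_fin, Nat.cast_add_one, add_sub_cancel_right] at hsum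
  have hlast : lam (Fin.last m) ≤ 2 * r * C := by
    nlinarith [hup (Fin.last m), sq_nonneg (c (Fin.last m))]
  have hgap : 0 < (m : ℝ) - p * α / β := by rw [sub_pos, div_lt_iff₀ hβ]; linarith
  calc 2 * ((m + 1 : ℝ) - p * α / β) = 2 + 2 * (m - p * α / β) := by ring
    _ ≤ 2 + 2 * (r * B) * (m - p * α / β) := by gcongr; linarith
    _ = 2 + 2 * r * B * m - p * (2 * r * (α / β * B)) := by ring
    _ ≤ (∑ i, lam i) - p * lam (Fin.last m) := by
      gcongr ?_ - p * ?_
      exact hlast.trans (by gcongr)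

/-- eigenvalue estimate under pinched negative radial curvature
`−α² ≤ K_r ≤ −β²`.  The curvature condition enters (as in the Hessian comparison
theorem, cf. the context) through the bounds
`β·coth(βr)[g − dr⊗dr] ≤ Hess(r) ≤ α·coth(αr)[g − dr⊗dr]` on the self-adjoint
operator `A` representing `Hess(r)`.  The manifold has dimension `m + 1` and
`lam 0 ≤ … ≤ lam m` are the eigenvalues of `Hess(r²) = 2 dr⊗dr + 2r Hess(r)`.
If `((m+1)−1)·β − p·α > 0`, then `Σᵢ λᵢ − p·λ_max ≥ 2((m+1) − p·α/β)`. -/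
theorem hessian_eigenvalue_estimate_negative_curvature {E : Type*} [NormedAddCommGroup E]
    [InnerProductSpace ℝ E] {m : ℕ}
    (p r α β : ℝ) (hp : 1 ≤ p) (hr : 0 < r)
    (hα : 0 < α) (hβ : 0 < β) (hdim : 0 < (m : ℝ) * β - p * α)
    (ρv : E) (hρv : ‖ρv‖ = 1)
    (A : E →ₗ[ℝ] E) (hAsym : ∀ v w, ⟪A v, w⟫ = ⟪v, A w⟫) (hAρ : A ρv = 0)
    (hA_lb : ∀ v, ⟪v, ρv⟫ = 0 →
      β * (Real.cosh (β * r) / Real.sinh (β * r)) * ‖v‖ ^ 2 ≤ ⟪A v, v⟫)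
    (hA_ub : ∀ v, ⟪v, ρv⟫ = 0 →
      ⟪A v, v⟫ ≤ α * (Real.cosh (α * r) / Real.sinh (α * r)) * ‖v‖ ^ 2)
    (lam : Fin (m + 1) → ℝ) (hmono : Monotone lam)
    (b : OrthonormalBasis (Fin (m + 1)) ℝ E)
    (hb : ∀ i, (2 * ⟪b i, ρv⟫) • ρv + (2 * r) • A (b i) = lam i • b i) :
    2 * (((m : ℝ) + 1) - p * α / β) ≤ (∑ i, lam i) - p * lam (Fin.last m) :=
  hessian_eigenvalue_estimate_negative_curvature_general p r α β hp hr hα hβ hdim ρv hρv A hAsym hAρ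
    hA_lb hA_ub lam b hb
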